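/- Fix n ≥ 1 and b₁, b₂ ∈ 𝔽₂, and let 𝒞 = {X = (x₁,x₂) ∈ 𝔽₂^{2×n} : parity(x₁)=b₁, parity(x₂)=b₂}. Then for any two distinct X, X' ∈ 𝒞, the sum matrices X⁺ and X'⁺ are at Hamming distance at least 3; consequently, no Y ∈ 𝔽₂^{3×n} is within Hamming distance 1 of both X⁺ and X'⁺, i.e., 𝒞 corrects a single substitution in the sum channel. -/
import Mathlib


/-- The sum matrix of a `2 × n` matrix. -/
def sumMatrix {n : ℕ} (X : Fin 2 → Fin n → ZMod 2) : Fin 3 → Fin n → ZMod 2 :=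
  ![X 0, X 1, fun j => X 0 j + X 1 j]

/-- Entrywise Hamming distance between two matrices. -/
def hd {m n : ℕ} (A B : Fin m → Fin n → ZMod 2) : ℕ :=
  (Finset.univ.filter fun p : Fin m × Fin n => A p.1 p.2 ≠ B p.1 p.2).card

open Finset

lemma even_filter_card {ι : Type*} [Fintype ι] [DecidableEq ι] (d : ι → ZMod 2)
    (h : ∑ i, d i = 0) : Even (univ.filter (fun i => d i ≠ 0)).card := by
  have hone : ∀ x : ZMod 2, x ≠ 0 → x = 1 := by decide
  have h1 : ∑ i, d i = ∑ i ∈ univ.filter (fun i => d i ≠ 0), d i := by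
    rw [Finset.sum_filter_ne_zero]
  have h2 : ∑ i ∈ univ.filter (fun i => d i ≠ 0), d i
      = ((univ.filter (fun i => d i ≠ 0)).card : ZMod 2) := by
    rw [Finset.sum_congr rfl (fun i hi => hone _ (Finset.mem_filter.mp hi).2)]
    simp
  rw [h1, h2] at h
  have := (ZMod.natCast_eq_zero_iff _ 2).mp h
  exact even_iff_two_dvd.mpr this

lemma hd_comm {m n : ℕ} (A B : Fin m → Fin n → ZMod 2) : hd A B = hd B A := by
  unfold hd
  congr 1
  ext p
  simp [ne_comm]

lemma hd_triangle {m n : ℕ} (A B C : Fin m → Fin n → ZMod 2) :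
    hd A B ≤ hd A C + hd C B := by
  unfold hd
  refine le_trans (Finset.card_le_card ?_) (Finset.card_union_le _ _)
  intro p hp
  simp only [Finset.mem_filter, Finset.mem_union, Finset.mem_univ, true_and] at *
  by_contra hcon
  push_neg at hcon
  exact hp (hcon.1.trans hcon.2)

theorem stmt17 (n : ℕ) (hn : 1 ≤ n) (b₁ b₂ : ZMod 2)
    (𝒞 : Set (Fin 2 → Fin n → ZMod 2))
    (h𝒞 : 𝒞 = {X | (∑ j, X 0 j) = b₁ ∧ (∑ j, X 1 j) = b₂}) :
    ∀ X ∈ 𝒞, ∀ X' ∈ 𝒞, X ≠ X' →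
      3 ≤ hd (sumMatrix X) (sumMatrix X') ∧
      ∀ Y : Fin 3 → Fin n → ZMod 2,
        ¬ (hd Y (sumMatrix X) ≤ 1 ∧ hd Y (sumMatrix X') ≤ 1) := by
  subst h𝒞
  intro X hX X' hX' hne
  obtain ⟨hX1, hX2⟩ := hX
  obtain ⟨hX1', hX2'⟩ := hX'
  set A := sumMatrix X with hA
  set B := sumMatrix X' with hB
  -- difference function
  set d : Fin 3 → Fin n → ZMod 2 := fun i j => A i j - B i j with hd_def
  have hdne : ∀ i j, d i j ≠ 0 ↔ A i j ≠ B i j := by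
    intro i j
    constructor
    · intro h heq; exact h (by simp [hd_def, heq])
    · intro h hz; exact h (by
        have : A i j - B i j = 0 := hz
        linear_combination this)
  -- rows have even number of differences
  have hrow : ∀ i : Fin 3, Even (univ.filter (fun j => A i j ≠ B i j)).card := by
    intro i
    have hsum : ∑ j, d i j = 0 := by
      fin_cases i <;>
        simp only [hd_def, hA, hB, sumMatrix, Matrix.cons_val_zero, Matrix.cons_val_one,
          Matrix.head_cons, Matrix.cons_val_two, Matrix.tail_cons] <;>
        rw [Finset.sum_sub_distrib] <;>
        simp [Finset.sum_add_distrib, hX1, hX2, hX1', hX2']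
    have := even_filter_card (d i) hsum
    convert this using 2
    ext j
    simp [hdne]
  -- columns have even number of differences
  have hcol : ∀ j : Fin n, Even (univ.filter (fun i : Fin 3 => A i j ≠ B i j)).card := by
    intro j
    have hsum : ∑ i, d i j = 0 := by
      rw [Fin.sum_univ_three]
      simp only [hd_def, hA, hB, sumMatrix, Matrix.cons_val_zero, Matrix.cons_val_one,
        Matrix.head_cons, Matrix.cons_val_two, Matrix.tail_cons]
      have h2 : (2 : ZMod 2) = 0 := rfl
      ring_nf
      rw [h2]
      ring
    have := even_filter_card (fun i => d i j) hsum
    convert this using 2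
    ext i
    simp [hdne]
  -- there is a difference somewhere
  have hex : ∃ p : Fin 3 × Fin n, A p.1 p.2 ≠ B p.1 p.2 := by
    by_contra hcon
    push_neg at hcon
    apply hne
    funext i j
    fin_cases i
    · have := hcon (0, j); simpa [hA, hB, sumMatrix] using this
    · have := hcon (1, j); simpa [hA, hB, sumMatrix] using this
  obtain ⟨a, ha⟩ := hex
  set S := univ.filter fun p : Fin 3 × Fin n => A p.1 p.2 ≠ B p.1 p.2 with hS
  have haS : a ∈ S := by simp [hS, ha]
  -- second element in the same row
  have hrowcard : 1 < (univ.filter (fun j => A a.1 j ≠ B a.1 j)).card := by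
    have hpos : 0 < (univ.filter (fun j => A a.1 j ≠ B a.1 j)).card :=
      Finset.card_pos.mpr ⟨a.2, by simp [ha]⟩
    rcases (hrow a.1) with ⟨k, hk⟩
    omega
  obtain ⟨j', hj'mem, hj'ne⟩ := Finset.exists_mem_ne hrowcard a.2
  have hj' : A a.1 j' ≠ B a.1 j' := (Finset.mem_filter.mp hj'mem).2
  -- second element in the same column
  have hcolcard : 1 < (univ.filter (fun i : Fin 3 => A i a.2 ≠ B i a.2)).card := by
    have hpos : 0 < (univ.filter (fun i : Fin 3 => A i a.2 ≠ B i a.2)).card :=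
      Finset.card_pos.mpr ⟨a.1, by simp [ha]⟩
    rcases (hcol a.2) with ⟨k, hk⟩
    omega
  obtain ⟨i', hi'mem, hi'ne⟩ := Finset.exists_mem_ne hcolcard a.1
  have hi' : A i' a.2 ≠ B i' a.2 := (Finset.mem_filter.mp hi'mem).2
  -- three distinct elements of S
  have hsub : ({a, (a.1, j'), (i', a.2)} : Finset (Fin 3 × Fin n)) ⊆ S := by
    intro p hp
    simp only [Finset.mem_insert, Finset.mem_singleton] at hp
    rcases hp with rfl | rfl | rfl <;> simp [hS, ha, hj', hi']
  have hcard3 : ({a, (a.1, j'), (i', a.2)} : Finset (Fin 3 × Fin n)).card = 3 := by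
    rw [Finset.card_insert_of_notMem, Finset.card_insert_of_notMem, Finset.card_singleton]
    · simp only [Finset.mem_singleton]
      intro h
      exact hi'ne (congrArg Prod.fst h).symm
    · simp only [Finset.mem_insert, Finset.mem_singleton]
      rintro (h | h)
      · exact hj'ne (congrArg Prod.snd h).symm
      · exact hi'ne (congrArg Prod.fst h).symm
  have hmain : 3 ≤ hd A B := by
    have := Finset.card_le_card hsub
    rw [hcard3] at this
    exact this
  refine ⟨hmain, ?_⟩
  intro Y ⟨h1, h2⟩
  have := hd_triangle A B Y
  rw [hd_comm A Y] at this
  omega
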